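/- The sum, over all permutations σ ∈ S_n with σ(n) = n, of the matrices T P(σ) Tᵗ equals (n−1)! times the n×n matrix whose (1,1) and (2,2) entries are 1 and all other entries are 0. -/

import Mathlib

open Matrix

/-- The n×n matrix `U` from the paper: first row all ones; row `m` (1-based, m≥2)
has entries −1 in columns 1,…,n−m+1, entry n−m+1 in column n−m+2, and 0 afterwards.
Indices are 0-based here, so row `i` corresponds to `m = i+1`. -/
noncomputable def Umat (n : ℕ) : Matrix (Fin n) (Fin n) ℝ :=
  Matrix.of fun i j =>
    if i.val = 0 then 1
    else if j.val < n - i.val then -1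
    else if j.val = n - i.val then ((n : ℝ) - i.val)
    else 0

/-- The diagonal matrix `A` with `A₁₁ = 1/√n` and `A_kk = 1/√((n−k+1)(n−k+2))` for k ≥ 2
(1-based `k = i+1`). -/
noncomputable def Amat (n : ℕ) : Matrix (Fin n) (Fin n) ℝ :=
  Matrix.diagonal fun i =>
    if i.val = 0 then 1 / Real.sqrt n
    else 1 / Real.sqrt (((n : ℝ) - i.val) * ((n : ℝ) - i.val + 1))

/-- The orthogonal transform `T = A U`. -/
noncomputable def Tmat (n : ℕ) : Matrix (Fin n) (Fin n) ℝ := Amat n * Umat n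

/-- The permutation matrix `P(σ)` with `P(σ)_{i,j} = 1` iff `j = σ(i)`. -/
def Pmat (n : ℕ) (σ : Equiv.Perm (Fin n)) : Matrix (Fin n) (Fin n) ℝ :=
  Matrix.of fun i j => if j = σ i then 1 else 0

/-! The permutations fixing the last point `ℓ` send a given `a ≠ ℓ` to a given `b ≠ ℓ` in
exactly `(n-2)!` ways, so `∑ P(σ) = (n-2)! (𝟙 - e_ℓ)(𝟙 - e_ℓ)ᵀ + (n-1)! e_ℓ e_ℓᵀ`.
Conjugating by `T` turns both terms into rank-one matrices built from `T 𝟙 = √n e₁` and the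
last column `T e_ℓ = (e₁ + √(n-1) e₂) / √n` of `T`, which live on the first two coordinates;
there the resulting `2 × 2` block is `(n-1)!` times the identity. -/

open Equiv Nat

section PermCount

variable {α : Type*} [Fintype α] [DecidableEq α]

theorem card_perm_fixing (s : Finset α) :
    Fintype.card {σ : Perm α // ∀ x ∈ s, σ x = x} = (Fintype.card α - s.card)! := by
  have e : Perm {x // x ∉ s} ≃ {σ : Perm α // ∀ x ∈ s, σ x = x} :=
    (Perm.subtypeEquivSubtypePerm (· ∉ s)).trans
      (Equiv.subtypeEquivRight fun σ => by simp only [not_not])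
  rw [← Fintype.card_congr e, Fintype.card_perm, Fintype.card_subtype_compl, Fintype.card_coe]

theorem card_perm_fixing_apply_eq {l a b : α} (ha : a ≠ l) (hb : b ≠ l) :
    Fintype.card {σ : Perm α // σ l = l ∧ σ a = b} = (Fintype.card α - 2)! := by
  have e : {σ : Perm α // σ l = l ∧ σ a = b} ≃
      {σ : Perm α // ∀ x ∈ ({l, a} : Finset α), σ x = x} :=
    Equiv.subtypeEquiv (Equiv.mulLeft (swap a b)) fun σ => by
      simp [Perm.mul_apply, swap_apply_eq_iff, swap_apply_of_ne_of_ne ha.symm hb.symm]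
  rw [Fintype.card_congr e, card_perm_fixing, Finset.card_pair ha.symm]

theorem sum_permMatrix_fixing (R : Type*) [Ring R] (l : α) :
    ∑ σ ∈ Finset.univ.filter (fun σ : Perm α => σ l = l), σ.permMatrix R =
      ((Fintype.card α - 2)! : R) • vecMulVec (1 - Pi.single l 1) (1 - Pi.single l 1) +
      ((Fintype.card α - 1)! : R) • vecMulVec (Pi.single l 1) (Pi.single l 1) := by
  ext a b
  have hcount : (∑ σ ∈ Finset.univ.filter (fun σ : Perm α => σ l = l), σ.permMatrix R) a b =
      Fintype.card {σ : Perm α // σ l = l ∧ σ a = b} := by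
    simp [Matrix.sum_apply, Finset.sum_boole, Finset.filter_filter, Fintype.card_subtype]
  rw [hcount]
  by_cases ha : a = l <;> by_cases hb : b = l
  · rw [ha, hb]
    simpa [vecMulVec_apply] using congrArg (Nat.cast (R := R)) (card_perm_fixing {l})
  · rw [ha]
    have : IsEmpty {σ : Perm α // σ l = l ∧ σ l = b} :=
      ⟨fun ⟨σ, h, h'⟩ => hb (h'.symm.trans h)⟩
    simp [vecMulVec_apply, hb]
  · rw [hb]
    have : IsEmpty {σ : Perm α // σ l = l ∧ σ a = l} :=
      ⟨fun ⟨σ, h, h'⟩ => ha (σ.injective (h'.trans h.symm))⟩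
    simp [vecMulVec_apply, ha]
  · simp [vecMulVec_apply, ha, hb, card_perm_fixing_apply_eq ha hb]

end PermCount

theorem Pmat_eq_permMatrix (n : ℕ) (σ : Perm (Fin n)) : Pmat n σ = σ.permMatrix ℝ := by
  ext i j
  simp [Pmat, eq_comm]

theorem mul_vecMulVec_mul_transpose {m k R : Type*} [Fintype k] [CommSemiring R]
    (M : Matrix m k R) (u v : k → R) :
    M * vecMulVec u v * Mᵀ = vecMulVec (M *ᵥ u) (M *ᵥ v) := by
  rw [mul_vecMulVec, vecMulVec_mul, vecMul_transpose]

def pairVec {n : ℕ} (a b : ℝ) : Fin n → ℝ := fun i =>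
  if i.val = 0 then a else if i.val = 1 then b else 0

theorem pairVec_sub {n : ℕ} (a b c d : ℝ) :
    (pairVec a b : Fin n → ℝ) - pairVec c d = pairVec (a - c) (b - d) := by
  ext i
  simp only [pairVec, Pi.sub_apply]
  split_ifs <;> ring

theorem smul_vecMulVec_pairVec_add_smul_vecMulVec_pairVec {n : ℕ} {a b p q r s k : ℝ}
    (h00 : a * p ^ 2 + b * r ^ 2 = k) (h01 : a * (p * q) + b * (r * s) = 0)
    (h11 : a * q ^ 2 + b * s ^ 2 = k) :
    a • vecMulVec (pairVec p q) (pairVec p q) + b • vecMulVec (pairVec r s) (pairVec r s) =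
      k • of (fun i j : Fin n => if i = j ∧ i.val ≤ 1 then (1 : ℝ) else 0) := by
  ext i j
  simp only [Matrix.add_apply, Matrix.smul_apply, vecMulVec_apply, of_apply, smul_eq_mul,
    pairVec, Fin.ext_iff]
  split_ifs <;> first
    | omega | linear_combination h00 | linear_combination h01 | linear_combination h11 | simp

theorem Umat_row_sum (n : ℕ) (i : Fin n) :
    ∑ j, Umat n i j = if i.val = 0 then (n : ℝ) else 0 := by
  by_cases hi : i.val = 0
  · simp [Umat, hi]
  have hk : n - i.val < n := by omega
  have hrow : ∀ j : Fin n, Umat n i j = -(if j.val < n - i.val then 1 else 0) +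
      if j = ⟨n - i.val, hk⟩ then ((n - i.val : ℕ) : ℝ) else 0 := by
    intro j
    simp only [Umat, of_apply, hi, if_false, Fin.ext_iff]
    split_ifs <;> first | omega | push_cast [Nat.cast_sub i.isLt.le]; ring
  simp only [hrow, Finset.sum_add_distrib, Finset.sum_neg_distrib, Finset.sum_boole,
    Fin.card_filter_val_lt, Finset.sum_ite_eq', Finset.mem_univ, if_true, hi, if_false]
  rw [min_eq_right hk.le]
  ring

theorem Umat_col_last (n : ℕ) (hn : 0 < n) :
    (Umat n).col ⟨n - 1, by omega⟩ = pairVec 1 ((n : ℝ) - 1) := by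
  ext i
  simp only [col_apply, Umat, of_apply, pairVec]
  split_ifs <;> first | omega | simp_all

theorem Tmat_mulVec_one (n : ℕ) : Tmat n *ᵥ 1 = pairVec √(n : ℝ) 0 := by
  ext i
  have hrow : (Umat n *ᵥ 1) i = if i.val = 0 then (n : ℝ) else 0 := by
    simp [mulVec, dotProduct, Umat_row_sum]
  rw [Tmat, ← mulVec_mulVec, Amat, mulVec_diagonal, hrow]
  simp only [pairVec]
  split_ifs
  · exact (one_div_mul_eq_div _ _).trans Real.div_sqrt
  all_goals simp

theorem Tmat_col_last (n : ℕ) (hn : 0 < n) :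
    (Tmat n).col ⟨n - 1, by omega⟩ = pairVec (1 / √(n : ℝ)) (√((n : ℝ) - 1) / √(n : ℝ)) := by
  ext i
  have hU := congrFun (Umat_col_last n hn) i
  simp only [col_apply] at hU ⊢
  rw [Tmat, Amat, diagonal_mul, hU]
  simp only [pairVec]
  split_ifs with _ h1
  · simp
  · have hn1 : (1 : ℝ) ≤ n := by exact_mod_cast hn
    simp only [h1, Nat.cast_one, sub_add_cancel]
    rw [Real.sqrt_mul (by linarith), one_div_mul_eq_div, ← div_div, Real.div_sqrt]
  · simp

theorem factorial_sqrt_block_identities (n : ℕ) (hn : 2 ≤ n) :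
    ((n - 2)! : ℝ) * (√(n : ℝ) - 1 / √(n : ℝ)) ^ 2 + ((n - 1)! : ℝ) * (1 / √(n : ℝ)) ^ 2
        = (n - 1)! ∧
      ((n - 2)! : ℝ) * ((√(n : ℝ) - 1 / √(n : ℝ)) * (0 - √((n : ℝ) - 1) / √(n : ℝ))) +
        ((n - 1)! : ℝ) * (1 / √(n : ℝ) * (√((n : ℝ) - 1) / √(n : ℝ))) = 0 ∧
      ((n - 2)! : ℝ) * (0 - √((n : ℝ) - 1) / √(n : ℝ)) ^ 2 +
        ((n - 1)! : ℝ) * (√((n : ℝ) - 1) / √(n : ℝ)) ^ 2 = (n - 1)! := by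
  have hN : (1 : ℝ) < n := by exact_mod_cast hn
  have hsq : √(n : ℝ) ^ 2 = n := Real.sq_sqrt (by linarith)
  have hsq' : √((n : ℝ) - 1) ^ 2 = n - 1 := Real.sq_sqrt (by linarith)
  have hfact : ((n - 1)! : ℝ) = ((n : ℝ) - 1) * (n - 2)! := by
    rw [← Nat.mul_factorial_pred (by omega : n - 1 ≠ 0), Nat.cast_mul, Nat.cast_pred (by omega),
      Nat.sub_sub]
  refine ⟨?_, ?_, ?_⟩ <;> rw [hfact] <;> field_simp
  · rw [hsq]; ring
  · rw [hsq]; ring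
  · linear_combination (n : ℝ) * hsq' - ((n : ℝ) - 1) * hsq

/-- The sum of T P(σ) Tᵗ over all σ ∈ Sₙ fixing the last element n equals
(n−1)! times the matrix whose (1,1) and (2,2) entries are 1 and all others 0. -/
theorem stmt_12 (n : ℕ) (hn : 3 ≤ n) :
    ∑ σ ∈ Finset.univ.filter
        (fun σ : Equiv.Perm (Fin n) => σ ⟨n - 1, by omega⟩ = ⟨n - 1, by omega⟩),
      Tmat n * Pmat n σ * (Tmat n)ᵀ =
    ((n - 1).factorial : ℝ) •
      Matrix.of (fun i j : Fin n => if i = j ∧ i.val ≤ 1 then (1 : ℝ) else 0) := by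
  obtain ⟨h00, h01, h11⟩ := factorial_sqrt_block_identities n (by omega)
  rw [← Finset.sum_mul, ← Finset.mul_sum]
  simp only [Pmat_eq_permMatrix]
  rw [sum_permMatrix_fixing, Fintype.card_fin]
  simp only [Matrix.mul_add, Matrix.add_mul, Matrix.mul_smul, Matrix.smul_mul,
    mul_vecMulVec_mul_transpose, mulVec_sub, mulVec_single_one, Tmat_mulVec_one,
    Tmat_col_last n (by omega), pairVec_sub]
  exact smul_vecMulVec_pairVec_add_smul_vecMulVec_pairVec h00 h01 h11
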